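/- arXiv:1310.2981 — 3 statements merged into one kernel-verified Lean document; each statement's English description precedes it below -/
import Mathlib

section
/- Let q be a real number with 0 < q < 1 and let y be a real number with q^2·|y| < 1. Then the family ((2/d)·y^d/(q^d − q^{−d})^2) indexed by positive odd integers d is summable, the family (m·log((1 + q^{2m}y)/(1 − q^{2m}y))) indexed by positive integers m is summable, and ∑_{d odd, d ≥ 1} (2/d)·y^d/(q^d − q^{−d})^2 = ∑_{m=1}^∞ m·log((1 + q^{2m}y)/(1 − q^{2m}y)). -/
private def oddEquiv : ℕ ≃ {d : ℕ // Odd d} where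
  toFun k := ⟨2 * k + 1, ⟨k, by ring⟩⟩
  invFun d := (d : ℕ) / 2
  left_inv k := by
    show (2 * k + 1) / 2 = k
    omega
  right_inv d := by
    obtain ⟨d, k, hk⟩ := d
    apply Subtype.ext
    simp only
    omega

private lemma odd_log_series {x : ℝ} (hx : |x| < 1) :
    HasSum (fun d : {d : ℕ // Odd d} => 2 / ((d : ℕ) : ℝ) * x ^ (d : ℕ))
      (Real.log (1 + x) - Real.log (1 - x)) := by
  apply (Equiv.hasSum_iff oddEquiv).mp
  have h := Real.hasSum_log_sub_log_of_abs_lt_one hx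
  have e : ((fun d : {d : ℕ // Odd d} => 2 / ((d : ℕ) : ℝ) * x ^ (d : ℕ)) ∘ oddEquiv)
      = fun k : ℕ => (2 : ℝ) * (1 / (2 * k + 1)) * x ^ (2 * k + 1) := by
    funext k
    simp only [Function.comp, oddEquiv, Equiv.coe_fn_mk]
    push_cast
    ring
  rw [e]
  exact h

private lemma pnat_coe_mul_geometric {r : ℝ} (hr : |r| < 1) :
    HasSum (fun m : ℕ+ => ((m : ℕ) : ℝ) * r ^ (m : ℕ)) (r / (1 - r) ^ 2) := by
  have h := hasSum_coe_mul_geometric_of_norm_lt_one (𝕜 := ℝ) (r := r)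
    (by rwa [Real.norm_eq_abs])
  refine (Function.Injective.hasSum_iff (f := fun n : ℕ => (n : ℝ) * r ^ n)
    (g := fun m : ℕ+ => (m : ℕ)) (fun a b hab => PNat.coe_injective hab) ?_).mpr h
  intro x hx
  have hx0 : x = 0 := by
    by_contra h0
    exact hx ⟨⟨x, Nat.pos_of_ne_zero h0⟩, rfl⟩
  simp [hx0]

private lemma row_hasSum (q z : ℝ) (hq0 : 0 < q) (hq1 : q < 1) (d : ℕ) (hd : 0 < d) :
    HasSum (fun m : ℕ+ => 2 / (d : ℝ) * ((m : ℕ) : ℝ) * (q ^ (2 * (m : ℕ)) * z) ^ d)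
      (2 / (d : ℝ) * z ^ d * (q ^ (2 * d) / (1 - q ^ (2 * d)) ^ 2)) := by
  have hr : |q ^ (2 * d)| < 1 := by
    rw [abs_of_pos (by positivity)]
    exact pow_lt_one₀ hq0.le hq1 (by omega)
  have h := (pnat_coe_mul_geometric hr).mul_left (2 / (d : ℝ) * z ^ d)
  have e : (fun m : ℕ+ => 2 / (d : ℝ) * ((m : ℕ) : ℝ) * (q ^ (2 * (m : ℕ)) * z) ^ d)
      = fun m : ℕ+ => 2 / (d : ℝ) * z ^ d * (((m : ℕ) : ℝ) * (q ^ (2 * d)) ^ (m : ℕ)) := by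
    funext m
    rw [mul_pow, ← pow_mul, ← pow_mul, show 2 * (m : ℕ) * d = 2 * d * (m : ℕ) by ring]
    ring
  rw [e, show 2 / (d : ℝ) * z ^ d * (q ^ (2 * d) / (1 - q ^ (2 * d)) ^ 2)
      = 2 / (d : ℝ) * z ^ d * (q ^ (2 * d) / (1 - q ^ (2 * d)) ^ 2) from rfl]
  exact h

private lemma denom_eq (q : ℝ) (hq0 : 0 < q) (hq1 : q < 1) (d : ℕ) (hd : 0 < d) (z : ℝ) :
    2 / (d : ℝ) * z ^ d * (q ^ (2 * d) / (1 - q ^ (2 * d)) ^ 2)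
      = 2 / (d : ℝ) * z ^ d / (q ^ d - q⁻¹ ^ d) ^ 2 := by
  have hs : q ^ d ≠ 0 := by positivity
  have h1 : q ^ (2 * d) = (q ^ d) ^ 2 := by rw [← pow_mul, mul_comm]
  have h2 : (q ^ d) ^ 2 < 1 := by
    rw [← h1]; exact pow_lt_one₀ hq0.le hq1 (by omega)
  have h1s : 1 - (q ^ d) ^ 2 ≠ 0 := by linarith
  have hss : q ^ d - (q ^ d)⁻¹ ≠ 0 := by
    intro h
    have : (q ^ d) ^ 2 = 1 := by
      field_simp at h
      nlinarith [h]
    linarith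
  have key : (q ^ d - (q ^ d)⁻¹) ^ 2 = (1 - (q ^ d) ^ 2) ^ 2 / (q ^ d) ^ 2 := by
    field_simp
    ring
  rw [inv_pow, h1, key, div_div_eq_mul_div, mul_div_assoc]

private lemma abs_term (q y : ℝ) (hq0 : 0 < q) (d : ℕ) (hd : 0 < d) (m : ℕ+) :
    |2 / (d : ℝ) * ((m : ℕ) : ℝ) * (q ^ (2 * (m : ℕ)) * y) ^ d|
      = 2 / (d : ℝ) * ((m : ℕ) : ℝ) * (q ^ (2 * (m : ℕ)) * |y|) ^ d := by
  rw [abs_mul, abs_mul, abs_pow, abs_mul,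
    abs_of_nonneg (by positivity : (0:ℝ) ≤ 2 / (d : ℝ)),
    abs_of_nonneg (by positivity : (0:ℝ) ≤ ((m : ℕ) : ℝ)),
    abs_of_nonneg (by positivity : (0:ℝ) ≤ q ^ (2 * (m : ℕ)))]

/-- For `0 < q < 1` and real `y` with `q^2 * |y| < 1`, the family
`(2/d) * y^d / (q^d - q^{-d})^2` indexed by positive odd integers `d` is summable,
the family `m * log((1 + q^(2m) y)/(1 - q^(2m) y))` indexed by positive integers `m`
is summable, and the two sums agree. -/
theorem odd_sum_eq_log_prod_sum (q y : ℝ) (hq0 : 0 < q) (hq1 : q < 1)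
    (hy : q ^ 2 * |y| < 1) :
    Summable (fun d : {d : ℕ // Odd d} =>
      (2 / ((d : ℕ) : ℝ)) * y ^ (d : ℕ) / (q ^ (d : ℕ) - q⁻¹ ^ (d : ℕ)) ^ 2) ∧
    Summable (fun m : ℕ+ =>
      (m : ℝ) * Real.log ((1 + q ^ (2 * (m : ℕ)) * y) / (1 - q ^ (2 * (m : ℕ)) * y))) ∧
    ∑' d : {d : ℕ // Odd d},
        (2 / ((d : ℕ) : ℝ)) * y ^ (d : ℕ) / (q ^ (d : ℕ) - q⁻¹ ^ (d : ℕ)) ^ 2 =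
      ∑' m : ℕ+,
        (m : ℝ) * Real.log ((1 + q ^ (2 * (m : ℕ)) * y) / (1 - q ^ (2 * (m : ℕ)) * y)) := by
  have hq2 : q ^ 2 < 1 := pow_lt_one₀ hq0.le hq1 two_ne_zero
  set F : {d : ℕ // Odd d} × ℕ+ → ℝ :=
    fun p => 2 / ((p.1 : ℕ) : ℝ) * ((p.2 : ℕ) : ℝ) * (q ^ (2 * (p.2 : ℕ)) * y) ^ (p.1 : ℕ)
    with hFdef
  have hdpos : ∀ d : {d : ℕ // Odd d}, 0 < (d : ℕ) := fun d => d.2.pos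
  -- sum over m for fixed odd d
  have key1 : ∀ d : {d : ℕ // Odd d},
      HasSum (fun m : ℕ+ => F (d, m))
        (2 / ((d : ℕ) : ℝ) * y ^ (d : ℕ) / (q ^ (d : ℕ) - q⁻¹ ^ (d : ℕ)) ^ 2) := by
    intro d
    have h := row_hasSum q y hq0 hq1 (d : ℕ) (hdpos d)
    rwa [denom_eq q hq0 hq1 (d : ℕ) (hdpos d) y] at h
  -- smallness of each q^(2m) y
  have hxlt : ∀ m : ℕ+, |q ^ (2 * (m : ℕ)) * y| < 1 := by
    intro m
    rw [abs_mul, abs_of_nonneg (by positivity : (0:ℝ) ≤ q ^ (2 * (m : ℕ)))]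
    have h1 : q ^ (2 * (m : ℕ)) ≤ q ^ 2 :=
      pow_le_pow_of_le_one hq0.le hq1.le (Nat.le_mul_of_pos_right 2 m.2)
    calc q ^ (2 * (m : ℕ)) * |y| ≤ q ^ 2 * |y| :=
          mul_le_mul_of_nonneg_right h1 (abs_nonneg y)
      _ < 1 := hy
  -- sum over odd d for fixed m
  have key2 : ∀ m : ℕ+,
      HasSum (fun d : {d : ℕ // Odd d} => F (d, m))
        ((m : ℝ) * Real.log ((1 + q ^ (2 * (m : ℕ)) * y) / (1 - q ^ (2 * (m : ℕ)) * y))) := by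
    intro m
    have hx := hxlt m
    have hx1 := abs_lt.mp hx
    have h := (odd_log_series hx).mul_left ((m : ℕ) : ℝ)
    rw [Real.log_div (by linarith) (by linarith)]
    have e : (fun d : {d : ℕ // Odd d} => F (d, m))
        = fun d : {d : ℕ // Odd d} =>
            ((m : ℕ) : ℝ) * (2 / ((d : ℕ) : ℝ) * (q ^ (2 * (m : ℕ)) * y) ^ (d : ℕ)) := by
      funext d
      simp only [hFdef]
      ring
    rw [e]
    convert h using 2
  -- absolute value rows
  have habs_row : ∀ d : {d : ℕ // Odd d},
      HasSum (fun m : ℕ+ => |F (d, m)|)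
        (2 / ((d : ℕ) : ℝ) * |y| ^ (d : ℕ)
          * (q ^ (2 * (d : ℕ)) / (1 - q ^ (2 * (d : ℕ))) ^ 2)) := by
    intro d
    have h := row_hasSum q |y| hq0 hq1 (d : ℕ) (hdpos d)
    have e : (fun m : ℕ+ => |F (d, m)|)
        = fun m : ℕ+ => 2 / ((d : ℕ) : ℝ) * ((m : ℕ) : ℝ)
            * (q ^ (2 * (m : ℕ)) * |y|) ^ (d : ℕ) :=
      funext fun m => abs_term q y hq0 (d : ℕ) (hdpos d) m
    rw [e]
    exact h
  -- majorant
  have hmaj : Summable (fun d : {d : ℕ // Odd d} =>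
      2 * (q ^ 2 * |y|) ^ (d : ℕ) / (1 - q ^ 2) ^ 2) := by
    have h : Summable (fun n : ℕ => 2 * (q ^ 2 * |y|) ^ n / (1 - q ^ 2) ^ 2) :=
      ((summable_geometric_of_lt_one (by positivity) hy).mul_left 2).div_const _
    exact h.comp_injective Subtype.coe_injective
  have habs : Summable (fun p : {d : ℕ // Odd d} × ℕ+ => |F p|) := by
    rw [summable_prod_of_nonneg (fun p => abs_nonneg _)]
    refine ⟨fun d => (habs_row d).summable, ?_⟩
    refine Summable.of_nonneg_of_le (fun d => tsum_nonneg fun m => abs_nonneg _) ?_ hmaj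
    intro d
    rw [(habs_row d).tsum_eq]
    have hd1 : (1:ℝ) ≤ ((d : ℕ) : ℝ) := by exact_mod_cast hdpos d
    have hq2d : q ^ (2 * (d : ℕ)) ≤ q ^ 2 :=
      pow_le_pow_of_le_one hq0.le hq1.le (by have := hdpos d; omega)
    have h1 : (0:ℝ) < 1 - q ^ 2 := by linarith
    have h2 : (0:ℝ) < 1 - q ^ (2 * (d : ℕ)) := by
      have := pow_lt_one₀ hq0.le hq1 (show 2 * (d : ℕ) ≠ 0 by have := hdpos d; omega)
      linarith
    have e1 : |y| ^ (d : ℕ) * q ^ (2 * (d : ℕ)) = (q ^ 2 * |y|) ^ (d : ℕ) := by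
      rw [pow_mul, mul_pow]; ring
    calc 2 / ((d : ℕ) : ℝ) * |y| ^ (d : ℕ)
          * (q ^ (2 * (d : ℕ)) / (1 - q ^ (2 * (d : ℕ))) ^ 2)
        = (2 / ((d : ℕ) : ℝ)) * ((q ^ 2 * |y|) ^ (d : ℕ) / (1 - q ^ (2 * (d : ℕ))) ^ 2) := by
          rw [← e1]; ring
      _ ≤ 2 * ((q ^ 2 * |y|) ^ (d : ℕ) / (1 - q ^ 2) ^ 2) := by
          have hdiv : 2 / ((d : ℕ) : ℝ) ≤ 2 := by
            calc 2 / ((d : ℕ) : ℝ) ≤ 2 / 1 := by gcongr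
              _ = 2 := by norm_num
          have hden : (1 - q ^ 2) ^ 2 ≤ (1 - q ^ (2 * (d : ℕ))) ^ 2 := by
            gcongr
          gcongr
      _ = 2 * (q ^ 2 * |y|) ^ (d : ℕ) / (1 - q ^ 2) ^ 2 := by ring
  have hFsum : Summable F := habs.of_abs
  refine ⟨?_, ?_, ?_⟩
  · exact hFsum.prod.congr fun d => (key1 d).tsum_eq
  · exact (hFsum.prod_symm.prod).congr fun m => (key2 m).tsum_eq
  · calc ∑' d : {d : ℕ // Odd d},
          (2 / ((d : ℕ) : ℝ)) * y ^ (d : ℕ) / (q ^ (d : ℕ) - q⁻¹ ^ (d : ℕ)) ^ 2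
        = ∑' d : {d : ℕ // Odd d}, ∑' m : ℕ+, F (d, m) :=
          tsum_congr fun d => ((key1 d).tsum_eq).symm
      _ = ∑' m : ℕ+, ∑' d : {d : ℕ // Odd d}, F (d, m) :=
          (Summable.tsum_comm (f := fun d m => F (d, m)) hFsum).symm
      _ = ∑' m : ℕ+,
          (m : ℝ) * Real.log ((1 + q ^ (2 * (m : ℕ)) * y) / (1 - q ^ (2 * (m : ℕ)) * y)) :=
          tsum_congr fun m => (key2 m).tsum_eq
end

section
/- Let q be a real number with q > 1 and let y be a real number with |y| < q^2. Then the family ((2/d)·y^d/(q^d − q^{−d})^2) indexed by positive odd integers d is summable, the family (m·log((1 + q^{−2m}y)/(1 − q^{−2m}y))) indexed by positive integers m is summable, and ∑_{d odd, d ≥ 1} (2/d)·y^d/(q^d − q^{−d})^2 = ∑_{m=1}^∞ m·log((1 + q^{−2m}y)/(1 − q^{−2m}y)). -/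
/-!
Both sides are the two iterated sums of the absolutely summable double series
`∑_{d odd, m ≥ 1} (2/d) m (t^m y)^d` with `t = q⁻²`. Summing over `m` first,
`∑ m x^m = x/(1-x)^2` at `x = t^d` gives `(2/d) y^d / (q^d - q^{-d})^2`; summing over `d` first,
`∑_{d odd} (2/d) u^d = log((1+u)/(1-u))` at `u = t^m y`. Absolute convergence needs `|t y| < 1`,
which is the hypothesis `|y| < q^2`.
-/

open Real

def oddNatEquiv : ℕ ≃ {d : ℕ // Odd d} where
  toFun k := ⟨2 * k + 1, odd_two_mul_add_one k⟩
  invFun d := d / 2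
  left_inv k := show (2 * k + 1) / 2 = k by omega
  right_inv := by rintro ⟨d, k, rfl⟩; ext; show 2 * ((2 * k + 1) / 2) + 1 = 2 * k + 1; omega

theorem hasSum_odd_log_div_of_abs_lt_one {u : ℝ} (hu : |u| < 1) :
    HasSum (fun d : {d : ℕ // Odd d} => 2 / (d : ℝ) * u ^ (d : ℕ))
      (log ((1 + u) / (1 - u))) := by
  obtain ⟨hu₁, hu₂⟩ := abs_lt.mp hu
  rw [log_div (by linarith) (by linarith), ← oddNatEquiv.hasSum_iff]
  convert hasSum_log_sub_log_of_abs_lt_one hu using 2 with k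
  simp only [Function.comp_apply, oddNatEquiv, Equiv.coe_fn_mk]
  push_cast
  ring

theorem hasSum_pnat_coe_mul_geometric {𝕜 : Type*} [NormedDivisionRing 𝕜] [CompleteSpace 𝕜]
    {x : 𝕜} (hx : ‖x‖ < 1) :
    HasSum (fun m : ℕ+ => (m : 𝕜) * x ^ (m : ℕ)) (x / (1 - x) ^ 2) :=
  (hasSum_pnat_iff (f := fun n : ℕ => (n : 𝕜) * x ^ n)).mpr <| by
    rw [Nat.cast_zero, zero_mul, add_zero]
    exact hasSum_coe_mul_geometric_of_norm_lt_one hx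

theorem sq_div_one_sub_sq_sq_of_mul_eq_one {K : Type*} [Field K] {a b : K} (hab : a * b = 1) :
    b ^ 2 / (1 - b ^ 2) ^ 2 = 1 / (a - b) ^ 2 := by
  have : a - b = a * (1 - b ^ 2) := by linear_combination b * hab
  rw [this, mul_pow, ← div_div, one_div, ← inv_pow, inv_eq_of_mul_eq_one_right hab]

noncomputable def oddDoubleTerm (t y : ℝ) (p : {d : ℕ // Odd d} × ℕ+) : ℝ :=
  2 / ((p.1 : ℕ) : ℝ) * (p.2 : ℝ) * (t ^ (p.2 : ℕ) * y) ^ (p.1 : ℕ)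

theorem mul_abs_pow_mul_pow_le {t : ℝ} (ht₀ : 0 ≤ t) (ht₁ : t ≤ 1) (y : ℝ) {m d : ℕ}
    (hm : 1 ≤ m) (hd : 1 ≤ d) : t * |t ^ m * y| ^ d ≤ t ^ m * |t * y| ^ d := by
  have hexp : t ^ (m * d + 1) ≤ t ^ (m + d) := pow_le_pow_of_le_one ht₀ ht₁ (by nlinarith)
  calc t * |t ^ m * y| ^ d = t ^ (m * d + 1) * |y| ^ d := by
        rw [abs_mul, abs_of_nonneg (pow_nonneg ht₀ _), mul_pow, ← pow_mul]; ring
    _ ≤ t ^ (m + d) * |y| ^ d := by gcongr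
    _ = t ^ m * |t * y| ^ d := by rw [abs_mul, abs_of_nonneg ht₀, mul_pow]; ring

theorem summable_oddDoubleTerm {t y : ℝ} (ht₀ : 0 < t) (ht₁ : t < 1) (hty : |t * y| < 1) :
    Summable (oddDoubleTerm t y) := by
  have hgeom : Summable fun d : {d : ℕ // Odd d} => |t * y| ^ (d : ℕ) :=
    (summable_geometric_of_lt_one (abs_nonneg _) hty).comp_injective Subtype.val_injective
  have harith : Summable fun m : ℕ+ => 2 / t * ((m : ℝ) * t ^ (m : ℕ)) :=
    (hasSum_pnat_coe_mul_geometric (x := t) (by rwa [norm_of_nonneg ht₀.le])).summable.mul_left _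
  have hbound := hgeom.mul_of_nonneg harith (fun _ => by positivity) (fun _ => by positivity)
  refine Summable.of_norm_bounded hbound ?_
  rintro ⟨⟨d, hd⟩, m⟩
  have hd₁ : (1 : ℝ) ≤ d := by exact_mod_cast hd.pos
  have hpow := mul_abs_pow_mul_pow_le ht₀.le ht₁.le y m.pos hd.pos
  calc ‖oddDoubleTerm t y (⟨d, hd⟩, m)‖ = 2 / d * m * |t ^ (m : ℕ) * y| ^ d := by
        simp [oddDoubleTerm, abs_mul]
    _ ≤ 2 * m * |t ^ (m : ℕ) * y| ^ d := by gcongr; exact div_le_self zero_le_two hd₁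
    _ ≤ |t * y| ^ d * (2 / t * (m * t ^ (m : ℕ))) := by
        rw [div_mul_eq_mul_div, mul_div_assoc', le_div_iff₀ ht₀]
        have hm : (0 : ℝ) < m := by exact_mod_cast m.pos
        nlinarith

theorem hasSum_oddDoubleTerm_pnat {t : ℝ} (ht : |t| < 1) (y : ℝ) (d : {d : ℕ // Odd d}) :
    HasSum (fun m : ℕ+ => oddDoubleTerm t y (d, m))
      (2 / ((d : ℕ) : ℝ) * y ^ (d : ℕ) * (t ^ (d : ℕ) / (1 - t ^ (d : ℕ)) ^ 2)) := by
  have hd : ‖t ^ (d : ℕ)‖ < 1 := by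
    rw [norm_pow, Real.norm_eq_abs]; exact pow_lt_one₀ (abs_nonneg t) ht d.2.pos.ne'
  refine ((hasSum_pnat_coe_mul_geometric hd).mul_left _).congr_fun fun m => ?_
  rw [oddDoubleTerm, mul_pow, ← pow_mul, ← pow_mul, mul_comm (m : ℕ)]
  ring

theorem hasSum_oddDoubleTerm_odd {t y : ℝ} (ht₀ : 0 ≤ t) (ht₁ : t ≤ 1) (hty : |t * y| < 1)
    (m : ℕ+) :
    HasSum (fun d : {d : ℕ // Odd d} => oddDoubleTerm t y (d, m))
      (m * log ((1 + t ^ (m : ℕ) * y) / (1 - t ^ (m : ℕ) * y))) := by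
  have hu : |t ^ (m : ℕ) * y| < 1 := by
    rw [abs_mul, abs_of_nonneg (pow_nonneg ht₀ _)]
    rw [abs_mul, abs_of_nonneg ht₀] at hty
    exact lt_of_le_of_lt (by gcongr; exact pow_le_of_le_one ht₀ ht₁ m.ne_zero) hty
  refine ((hasSum_odd_log_div_of_abs_lt_one hu).mul_left _).congr_fun fun d => ?_
  rw [oddDoubleTerm]
  ring

/-- For `q > 1` and real `y` with `|y| < q^2`, the family
`(2/d) * y^d / (q^d - q^{-d})^2` indexed by positive odd integers `d` is summable,
the family `m * log((1 + q^(-2m) y)/(1 - q^(-2m) y))` indexed by positive integers `m`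
is summable, and the two sums agree. -/
theorem odd_sum_eq_log_prod_sum_q_gt_one (q y : ℝ) (hq : 1 < q)
    (hy : |y| < q ^ 2) :
    Summable (fun d : {d : ℕ // Odd d} =>
      (2 / ((d : ℕ) : ℝ)) * y ^ (d : ℕ) / (q ^ (d : ℕ) - q⁻¹ ^ (d : ℕ)) ^ 2) ∧
    Summable (fun m : ℕ+ =>
      (m : ℝ) * Real.log ((1 + q⁻¹ ^ (2 * (m : ℕ)) * y) / (1 - q⁻¹ ^ (2 * (m : ℕ)) * y))) ∧
    ∑' d : {d : ℕ // Odd d},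
        (2 / ((d : ℕ) : ℝ)) * y ^ (d : ℕ) / (q ^ (d : ℕ) - q⁻¹ ^ (d : ℕ)) ^ 2 =
      ∑' m : ℕ+,
        (m : ℝ) * Real.log ((1 + q⁻¹ ^ (2 * (m : ℕ)) * y) / (1 - q⁻¹ ^ (2 * (m : ℕ)) * y)) := by
  have hq₀ : 0 < q := zero_lt_one.trans hq
  have ht₀ : 0 < q⁻¹ ^ 2 := by positivity
  have ht₁ : q⁻¹ ^ 2 < 1 :=
    pow_lt_one₀ (inv_nonneg.2 hq₀.le) (inv_lt_one_of_one_lt₀ hq) two_ne_zero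
  have hty : |q⁻¹ ^ 2 * y| < 1 := by
    rwa [abs_mul, abs_of_pos ht₀, inv_pow, inv_mul_lt_one₀ (by positivity)]
  have hF := (summable_oddDoubleTerm ht₀ ht₁ hty).hasSum
  have hL := hF.prod_fiberwise fun d => by
    have hd := hasSum_oddDoubleTerm_pnat (by rwa [abs_of_pos ht₀]) y d
    have hqd : q ^ (d : ℕ) * q⁻¹ ^ (d : ℕ) = 1 := by
      rw [← mul_pow, mul_inv_cancel₀ hq₀.ne', one_pow]
    rwa [pow_right_comm, sq_div_one_sub_sq_sq_of_mul_eq_one hqd, mul_one_div] at hd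
  have hR := ((Equiv.prodComm _ _).hasSum_iff.mpr hF).prod_fiberwise fun m => by
    have hm := hasSum_oddDoubleTerm_odd ht₀.le ht₁.le hty m
    rw [← pow_mul] at hm
    exact hm
  exact ⟨hL.summable, hR.summable, hL.tsum_eq.trans hR.tsum_eq.symm⟩
end

section
/- Let q, t be real numbers with 0 < q < 1 and t > 0, and let z : ℤ → ℝ be a family with ∑_{i∈ℤ} |z_i| < ∞ and q^2·max(t, t^{−1})·|z_i| < 1 for every i ∈ ℤ. Then the family ((2/k)·((t^k − t^{−k})/(q^k − q^{−k})^2)·z_i^k) indexed by pairs (k, i) with k a positive odd integer and i ∈ ℤ is summable, the family (m·log(((1 + q^{2m}·t·z_i)(1 − q^{2m}·t^{−1}·z_i))/((1 − q^{2m}·t·z_i)(1 + q^{2m}·t^{−1}·z_i)))) indexed by pairs (m, i) ∈ ℕ₊ × ℤ is summable, and ∑_{k odd, k≥1} (2/k)·((t^k − t^{−k})/(q^k − q^{−k})^2)·(∑_{i∈ℤ} z_i^k) = ∑_{m=1}^∞ ∑_{i∈ℤ} m·log(((1 + q^{2m}·t·z_i)(1 − q^{2m}·t^{−1}·z_i))/((1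 − q^{2m}·t·z_i)(1 + q^{2m}·t^{−1}·z_i))). -/
open Filter Topology

/-!
Expanding every logarithm by `log ((1 + x) / (1 - x)) = ∑_{k odd} (2 / k) x ^ k` turns the
right-hand side into the triple series
`∑_{k, m, i} m (2 / k) ((q ^ (2m) t z_i) ^ k - (q ^ (2m) t⁻¹ z_i) ^ k)`.
Summing it over `m` first instead, `∑_{m ≥ 1} m q ^ (2mk) = (q ^ k - q ^ (-k)) ^ (-2)` produces the
left-hand side. Both orders of summation are legitimate because the triple series converges
absolutely: since `z_i → 0`, the numbers `q ^ 2 max(t, t⁻¹) |z_i|` stay below some `ρ < 1`, and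
the terms are dominated by `4 ρ ^ (k - 1) · m q ^ (2m) · max(t, t⁻¹) |z_i|`.
-/

def natEquivOdd : ℕ ≃ {k : ℕ // Odd k} where
  toFun n := ⟨2 * n + 1, odd_two_mul_add_one n⟩
  invFun k := (k : ℕ) / 2
  left_inv n := by dsimp only; omega
  right_inv k := Subtype.ext (Nat.two_mul_div_two_add_one_of_odd k.2)

theorem Summable.hasSum_fiberwise_equiv {M α β γ : Type*} [AddCommMonoid M] [TopologicalSpace M]
    [ContinuousAdd M] [T3Space M] {f : α → M} (hf : Summable f) (e : β × γ ≃ α) {g : β → M}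
    (hg : ∀ b, HasSum (fun c => f (e (b, c))) (g b)) :
    HasSum g (∑' a, f a) := by
  rw [← e.tsum_eq]
  exact (e.summable_iff.mpr hf).hasSum.prod_fiberwise hg

theorem exists_lt_one_forall_le_of_tendsto_zero {ι : Type*} {a : ι → ℝ}
    (ha : Tendsto a cofinite (𝓝 0)) (ha1 : ∀ i, a i < 1) : ∃ ρ < 1, ∀ i, a i ≤ ρ := by
  have hfin : {i | ¬ a i < 1 / 2}.Finite :=
    eventually_cofinite.mp (ha.eventually (gt_mem_nhds (by norm_num)))
  rcases Set.eq_empty_or_nonempty {i | ¬ a i < 1 / 2} with hs | hs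
  · refine ⟨1 / 2, by norm_num, fun i => ?_⟩
    exact (not_not.mp (Set.eq_empty_iff_forall_notMem.mp hs i)).le
  · obtain ⟨i₀, -, hi₀⟩ := Set.exists_max_image _ a hfin hs
    refine ⟨max (1 / 2) (a i₀), max_lt (by norm_num) (ha1 i₀), fun i => ?_⟩
    by_cases hi : a i < 1 / 2
    · exact le_max_of_le_left hi.le
    · exact le_max_of_le_right (hi₀ i hi)

theorem pow_le_mul_pow_pred {R : Type*} [Semiring R] [PartialOrder R] [IsOrderedRing R]
    {x ρ : R} (hx : 0 ≤ x) (hxρ : x ≤ ρ) {k : ℕ} (hk : k ≠ 0) : x ^ k ≤ x * ρ ^ (k - 1) := by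
  obtain ⟨n, rfl⟩ := Nat.exists_eq_succ_of_ne_zero hk
  rw [pow_succ', Nat.succ_sub_one]
  gcongr

theorem abs_pow_sub_pow_le_two_mul_pow {R : Type*} [Ring R] [LinearOrder R] [IsOrderedRing R]
    {a b x : R} (ha : |a| ≤ x) (hb : |b| ≤ x) (k : ℕ) :
    |a ^ k - b ^ k| ≤ 2 * x ^ k :=
  calc |a ^ k - b ^ k| ≤ |a| ^ k + |b| ^ k := by rw [← abs_pow, ← abs_pow]; exact abs_sub _ _
    _ ≤ 2 * x ^ k := by
      rw [two_mul]
      gcongr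

theorem hasSum_pnat_mul_geometric {x : ℝ} (hx : |x| < 1) :
    HasSum (fun m : ℕ+ => ((m : ℕ) : ℝ) * x ^ (m : ℕ)) (x / (1 - x) ^ 2) := by
  refine hasSum_pnat_iff (f := fun n : ℕ => (n : ℝ) * x ^ n) |>.mpr ?_
  simpa using hasSum_coe_mul_geometric_of_norm_lt_one (𝕜 := ℝ) (r := x) (by simpa using hx)

theorem hasSum_pnat_mul_pow_two_mul {x : ℝ} (hx0 : x ≠ 0) (hx : |x| < 1) :
    HasSum (fun m : ℕ+ => ((m : ℕ) : ℝ) * x ^ (2 * (m : ℕ))) ((x - x⁻¹) ^ 2)⁻¹ := by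
  have hx2 : |x ^ 2| < 1 := by rw [abs_pow]; exact pow_lt_one₀ (abs_nonneg x) hx two_ne_zero
  have hsq : ((x - x⁻¹) ^ 2)⁻¹ = x ^ 2 / (1 - x ^ 2) ^ 2 := by
    rw [← inv_div]; congr 1; field_simp; ring
  simpa only [pow_mul, hsq] using hasSum_pnat_mul_geometric hx2

theorem hasSum_odd_two_div_mul_pow {x : ℝ} (hx : |x| < 1) :
    HasSum (fun k : {k : ℕ // Odd k} => 2 / ((k : ℕ) : ℝ) * x ^ (k : ℕ))
      (Real.log ((1 + x) / (1 - x))) := by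
  obtain ⟨hx1, hx2⟩ := abs_lt.mp hx
  rw [Real.log_div (by linarith) (by linarith), ← natEquivOdd.hasSum_iff]
  convert Real.hasSum_log_sub_log_of_abs_lt_one hx using 2 with n
  simp [natEquivOdd, div_eq_mul_inv]

theorem hasSum_odd_log_ratio {a b : ℝ} (ha : |a| < 1) (hb : |b| < 1) :
    HasSum (fun k : {k : ℕ // Odd k} => 2 / ((k : ℕ) : ℝ) * (a ^ (k : ℕ) - b ^ (k : ℕ)))
      (Real.log ((1 + a) * (1 - b) / ((1 - a) * (1 + b)))) := by
  obtain ⟨ha1, ha2⟩ := abs_lt.mp ha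
  obtain ⟨hb1, hb2⟩ := abs_lt.mp hb
  have hA : (1 + a) / (1 - a) ≠ 0 := (div_pos (by linarith) (by linarith)).ne'
  have hB : (1 + b) / (1 - b) ≠ 0 := (div_pos (by linarith) (by linarith)).ne'
  rw [← div_div_div_eq, Real.log_div hA hB]
  simpa only [mul_sub] using (hasSum_odd_two_div_mul_pow ha).sub (hasSum_odd_two_div_mul_pow hb)

theorem abs_pow_mul_mul_le_max {q t : ℝ} (hq : 0 ≤ q) (ht : 0 < t) (m : ℕ) (w : ℝ) :
    |q ^ (2 * m) * t * w| ≤ (q ^ 2) ^ m * (max t t⁻¹ * |w|) ∧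
      |q ^ (2 * m) * t⁻¹ * w| ≤ (q ^ 2) ^ m * (max t t⁻¹ * |w|) := by
  simp only [abs_mul, abs_pow, abs_of_nonneg hq, abs_of_pos ht, abs_inv, ← pow_mul, ← mul_assoc]
  constructor <;> gcongr
  exacts [le_max_left _ _, le_max_right _ _]

noncomputable def freeEnergyTerm (q t : ℝ) (z : ℤ → ℝ) (p : {k : ℕ // Odd k} × ℕ+ × ℤ) : ℝ :=
  ((p.2.1 : ℕ) : ℝ) * (2 / ((p.1 : ℕ) : ℝ) *
    ((q ^ (2 * (p.2.1 : ℕ)) * t * z p.2.2) ^ (p.1 : ℕ) -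
      (q ^ (2 * (p.2.1 : ℕ)) * t⁻¹ * z p.2.2) ^ (p.1 : ℕ)))

theorem hasSum_freeEnergyTerm_pnat {q : ℝ} (hq0 : 0 < q) (hq1 : q < 1) (t : ℝ) (z : ℤ → ℝ)
    (k : {k : ℕ // Odd k}) (i : ℤ) :
    HasSum (fun m : ℕ+ => freeEnergyTerm q t z (k, m, i))
      (2 / ((k : ℕ) : ℝ) * ((t ^ (k : ℕ) - t⁻¹ ^ (k : ℕ)) / (q ^ (k : ℕ) - q⁻¹ ^ (k : ℕ)) ^ 2) *
        z i ^ (k : ℕ)) := by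
  have hqk : |q ^ (k : ℕ)| < 1 := by
    rw [abs_of_pos (pow_pos hq0 _)]
    exact pow_lt_one₀ hq0.le hq1 k.2.pos.ne'
  have h := ((hasSum_pnat_mul_pow_two_mul (pow_ne_zero _ hq0.ne') hqk).mul_left
    (2 / ((k : ℕ) : ℝ) * (t ^ (k : ℕ) - t⁻¹ ^ (k : ℕ)))).mul_right (z i ^ (k : ℕ))
  have hval : (t ^ (k : ℕ) - t⁻¹ ^ (k : ℕ)) / (q ^ (k : ℕ) - q⁻¹ ^ (k : ℕ)) ^ 2 =
      (t ^ (k : ℕ) - t⁻¹ ^ (k : ℕ)) * ((q ^ (k : ℕ) - (q ^ (k : ℕ))⁻¹) ^ 2)⁻¹ := by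
    rw [inv_pow q, div_eq_mul_inv]
  rw [hval, ← mul_assoc]
  refine h.congr_fun fun m => ?_
  simp only [freeEnergyTerm, mul_pow, ← pow_mul]
  ring

theorem hasSum_freeEnergyTerm_odd {q t : ℝ} {z : ℤ → ℝ} (hq0 : 0 < q) (hq1 : q < 1) (ht : 0 < t)
    (hzq : ∀ i : ℤ, q ^ 2 * max t t⁻¹ * |z i| < 1) (m : ℕ+) (i : ℤ) :
    HasSum (fun k : {k : ℕ // Odd k} => freeEnergyTerm q t z (k, m, i))
      (((m : ℕ) : ℝ) * Real.log
        (((1 + q ^ (2 * (m : ℕ)) * t * z i) * (1 - q ^ (2 * (m : ℕ)) * t⁻¹ * z i)) /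
          ((1 - q ^ (2 * (m : ℕ)) * t * z i) * (1 + q ^ (2 * (m : ℕ)) * t⁻¹ * z i)))) := by
  obtain ⟨ha, hb⟩ := abs_pow_mul_mul_le_max hq0.le ht m (z i)
  have hlt : (q ^ 2) ^ (m : ℕ) * (max t t⁻¹ * |z i|) < 1 := by
    refine lt_of_le_of_lt ?_ (hzq i)
    rw [mul_assoc]
    gcongr
    exact pow_le_of_le_one (by positivity) (pow_le_one₀ hq0.le hq1.le) m.ne_zero
  exact (hasSum_odd_log_ratio (ha.trans_lt hlt) (hb.trans_lt hlt)).mul_left _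

theorem abs_freeEnergyTerm_le {q t ρ : ℝ} {z : ℤ → ℝ} (hq0 : 0 < q) (hq1 : q < 1) (ht : 0 < t)
    (hρ : ∀ i : ℤ, q ^ 2 * max t t⁻¹ * |z i| ≤ ρ) (p : {k : ℕ // Odd k} × ℕ+ × ℤ) :
    |freeEnergyTerm q t z p| ≤
      4 * (ρ ^ ((p.1 : ℕ) - 1) *
        (((p.2.1 : ℕ) : ℝ) * (q ^ 2) ^ (p.2.1 : ℕ) * (max t t⁻¹ * |z p.2.2|))) := by
  obtain ⟨⟨k, hk⟩, m, i⟩ := p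
  obtain ⟨ha, hb⟩ := abs_pow_mul_mul_le_max hq0.le ht m (z i)
  have hxρ : (q ^ 2) ^ (m : ℕ) * (max t t⁻¹ * |z i|) ≤ ρ := by
    refine le_trans ?_ (hρ i)
    rw [mul_assoc]
    gcongr
    exact pow_le_of_le_one (by positivity) (pow_le_one₀ hq0.le hq1.le) m.ne_zero
  have hk2 : |2 / (k : ℝ)| ≤ 2 := by
    rw [abs_of_nonneg (by positivity)]
    exact div_le_self zero_le_two (by exact_mod_cast hk.pos)
  calc |freeEnergyTerm q t z (⟨k, hk⟩, m, i)|
      = (m : ℝ) * (|2 / (k : ℝ)| * |(q ^ (2 * (m : ℕ)) * t * z i) ^ k -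
          (q ^ (2 * (m : ℕ)) * t⁻¹ * z i) ^ k|) := by
        simp only [freeEnergyTerm, abs_mul, Nat.abs_cast]
    _ ≤ (m : ℝ) * (2 * (2 * ((q ^ 2) ^ (m : ℕ) * (max t t⁻¹ * |z i|) * ρ ^ (k - 1)))) := by
        gcongr
        refine (abs_pow_sub_pow_le_two_mul_pow ha hb k).trans ?_
        gcongr
        exact pow_le_mul_pow_pred (ha.trans' (abs_nonneg _)) hxρ hk.pos.ne'
    _ = 4 * (ρ ^ (k - 1) * ((m : ℝ) * (q ^ 2) ^ (m : ℕ) * (max t t⁻¹ * |z i|))) := by ring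

theorem summable_freeEnergyTerm {q t : ℝ} {z : ℤ → ℝ} (hq0 : 0 < q) (hq1 : q < 1) (ht : 0 < t)
    (hz : Summable fun i : ℤ => |z i|) (hzq : ∀ i : ℤ, q ^ 2 * max t t⁻¹ * |z i| < 1) :
    Summable (freeEnergyTerm q t z) := by
  obtain ⟨ρ, hρ1, hρ⟩ := exists_lt_one_forall_le_of_tendsto_zero
    (by simpa using hz.tendsto_cofinite_zero.const_mul (q ^ 2 * max t t⁻¹)) hzq
  have hρ0 : 0 ≤ ρ := le_trans (by positivity) (hρ 0)
  have hk : Summable fun k : {k : ℕ // Odd k} => ρ ^ ((k : ℕ) - 1) := by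
    have h : Summable fun n : ℕ => ρ ^ (n + 1 - 1) := by
      simpa only [Nat.add_sub_cancel] using summable_geometric_of_lt_one hρ0 hρ1
    exact ((summable_nat_add_iff (f := fun n : ℕ => ρ ^ (n - 1)) 1).mp h).subtype _
  have hm : Summable fun m : ℕ+ => ((m : ℕ) : ℝ) * (q ^ 2) ^ (m : ℕ) := by
    refine (hasSum_pnat_mul_geometric ?_).summable
    rw [abs_of_pos (pow_pos hq0 2)]
    exact pow_lt_one₀ hq0.le hq1 two_ne_zero
  have hmi := hm.mul_of_nonneg (hz.mul_left (max t t⁻¹)) (fun _ => by positivity)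
    (fun _ => by positivity)
  exact Summable.of_norm_bounded ((hk.mul_of_nonneg hmi (fun _ => by positivity)
    (fun _ => by positivity)).mul_left 4) (abs_freeEnergyTerm_le hq0 hq1 ht hρ)

/-- The analytic identity underlying the infinite product formula for the orthogonal
Chern–Simons partition function of the unknot: for `0 < q < 1`, `t > 0`, and a
summable family `z : ℤ → ℝ` with `q^2 * max(t, t⁻¹) * |z_i| < 1` for all `i`,
`∑_{k odd} (2/k) ((t^k - t^{-k})/(q^k - q^{-k})^2) pb_k(z)` equals
`∑_{m≥1} ∑_i m * log(((1+q^(2m) t z_i)(1-q^(2m) t⁻¹ z_i))/((1-q^(2m) t z_i)(1+q^(2m) t⁻¹ z_i)))`,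
with all the relevant families summable. -/
theorem unknot_free_energy_eq_log_sum (q t : ℝ) (hq0 : 0 < q) (hq1 : q < 1)
    (ht : 0 < t) (z : ℤ → ℝ) (hz : Summable fun i : ℤ => |z i|)
    (hzq : ∀ i : ℤ, q ^ 2 * max t t⁻¹ * |z i| < 1) :
    Summable (fun p : {k : ℕ // Odd k} × ℤ =>
      (2 / ((p.1 : ℕ) : ℝ)) *
        ((t ^ (p.1 : ℕ) - t⁻¹ ^ (p.1 : ℕ)) / (q ^ (p.1 : ℕ) - q⁻¹ ^ (p.1 : ℕ)) ^ 2) *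
        z p.2 ^ (p.1 : ℕ)) ∧
    Summable (fun p : ℕ+ × ℤ =>
      ((p.1 : ℕ) : ℝ) * Real.log
        (((1 + q ^ (2 * (p.1 : ℕ)) * t * z p.2) * (1 - q ^ (2 * (p.1 : ℕ)) * t⁻¹ * z p.2)) /
          ((1 - q ^ (2 * (p.1 : ℕ)) * t * z p.2) * (1 + q ^ (2 * (p.1 : ℕ)) * t⁻¹ * z p.2)))) ∧
    ∑' k : {k : ℕ // Odd k},
        (2 / ((k : ℕ) : ℝ)) *
          ((t ^ (k : ℕ) - t⁻¹ ^ (k : ℕ)) / (q ^ (k : ℕ) - q⁻¹ ^ (k : ℕ)) ^ 2) *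
          (∑' i : ℤ, z i ^ (k : ℕ)) =
      ∑' m : ℕ+, ∑' i : ℤ,
        ((m : ℕ) : ℝ) * Real.log
          (((1 + q ^ (2 * (m : ℕ)) * t * z i) * (1 - q ^ (2 * (m : ℕ)) * t⁻¹ * z i)) /
            ((1 - q ^ (2 * (m : ℕ)) * t * z i) * (1 + q ^ (2 * (m : ℕ)) * t⁻¹ * z i))) := by
  have hF := summable_freeEnergyTerm hq0 hq1 ht hz hzq
  have hG := hF.hasSum_fiberwise_equiv
    ((Equiv.prodAssoc _ _ _).trans ((Equiv.refl _).prodCongr (Equiv.prodComm _ _)))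
    fun p => hasSum_freeEnergyTerm_pnat hq0 hq1 t z p.1 p.2
  have hH := hF.hasSum_fiberwise_equiv (Equiv.prodComm _ _)
    fun p => hasSum_freeEnergyTerm_odd hq0 hq1 ht hzq p.1 p.2
  refine ⟨hG.summable, hH.summable, ?_⟩
  simp_rw [← tsum_mul_left]
  rw [← hG.summable.tsum_prod, hG.tsum_eq, ← hH.tsum_eq, hH.summable.tsum_prod]
end
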